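/- Let E be a real inner product space and F : E → ℝ be L-smooth and satisfy the Polyak–Łojasiewicz (PL) condition with constant μ > 0, with F_* = inf_w F(w) finite. Let 0 < η ≤ 1/L. Then for every w ∈ E and every vector g ∈ E, F(w − ηg) − F_* ≤ (1 − ημ)(F(w) − F_*) + (η/2)‖∇F(w) − g‖². -/

import Mathlib

/-!
Along the segment from `w` to `w + v`, the derivative of `t ↦ F (w + t • v)` exceeds its value at
`t = 0` by at most `L t ‖v‖²`, which gives the descent lemma
`F (w + v) ≤ F w + ⟪∇F w, v⟫ + L/2 ‖v‖²`. For `v = -η g` and `L η ≤ 1`, completing the square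
turns the right-hand side into `F w - η/2 ‖∇F w‖² + η/2 ‖∇F w - g‖²`, and the PL inequality
bounds `-η/2 ‖∇F w‖²` by `-η μ (F w - F_*)`.
-/

open RealInnerProductSpace

section

variable {E : Type*} [NormedAddCommGroup E] [InnerProductSpace ℝ E] [CompleteSpace E]
  {F : E → ℝ} {L : ℝ}

theorem HasGradientAt.hasDerivAt_comp_add_smul {f : E → ℝ} {f' w v : E} {t : ℝ}
    (h : HasGradientAt f f' (w + t • v)) :
    HasDerivAt (fun s : ℝ => f (w + s • v)) ⟪f', v⟫ t := by
  have hline : HasDerivAt (fun s : ℝ => w + s • v) v t := by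
    simpa using ((hasDerivAt_id t).smul_const v).const_add w
  simpa [InnerProductSpace.toDual, Function.comp_def] using
    h.hasFDerivAt.comp_hasDerivAt t hline

theorem inner_gradient_add_smul_sub_le
    (hlip : ∀ x y : E, ‖gradient F x - gradient F y‖ ≤ L * ‖x - y‖) (w v : E) {t : ℝ}
    (ht : 0 ≤ t) :
    ⟪gradient F (w + t • v) - gradient F w, v⟫ ≤ L * t * ‖v‖ ^ 2 :=
  calc ⟪gradient F (w + t • v) - gradient F w, v⟫
      ≤ ‖gradient F (w + t • v) - gradient F w‖ * ‖v‖ := real_inner_le_norm _ _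
    _ ≤ L * ‖(w + t • v) - w‖ * ‖v‖ := by gcongr; exact hlip _ _
    _ = L * t * ‖v‖ ^ 2 := by
      rw [add_sub_cancel_left, norm_smul, Real.norm_of_nonneg ht]; ring

theorem le_add_inner_gradient_add_sq_of_lipschitz_gradient (hF : Differentiable ℝ F)
    (hlip : ∀ x y : E, ‖gradient F x - gradient F y‖ ≤ L * ‖x - y‖) (w v : E) :
    F (w + v) ≤ F w + ⟪gradient F w, v⟫ + L / 2 * ‖v‖ ^ 2 := by
  have hderiv (t : ℝ) :
      HasDerivAt (fun s : ℝ => F (w + s • v)) ⟪gradient F (w + t • v), v⟫ t :=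
    (hF _).hasGradientAt.hasDerivAt_comp_add_smul
  have hbound (t : ℝ) : HasDerivAt
      (fun s : ℝ => F w + s * ⟪gradient F w, v⟫ + L / 2 * s ^ 2 * ‖v‖ ^ 2)
      (⟪gradient F w, v⟫ + L * t * ‖v‖ ^ 2) t := by
    refine ((((hasDerivAt_id' t).mul_const _).const_add (F w)).add
      (((hasDerivAt_pow 2 t).const_mul (L / 2)).mul_const (‖v‖ ^ 2))).congr_deriv ?_
    ring
  have key := image_le_of_deriv_right_le_deriv_boundary (a := 0) (b := 1)
    (fun t _ => (hderiv t).continuousAt.continuousWithinAt)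
    (fun t _ => (hderiv t).hasDerivWithinAt) (by simp)
    (fun t _ => (hbound t).continuousAt.continuousWithinAt)
    (fun t _ => (hbound t).hasDerivWithinAt)
    (fun t ht => by
      have := inner_gradient_add_smul_sub_le hlip w v ht.1
      rw [inner_sub_left] at this
      linarith)
    (Set.right_mem_Icc.2 zero_le_one)
  simpa using key

theorem apply_sub_smul_le_of_lipschitz_gradient (hF : Differentiable ℝ F)
    (hlip : ∀ x y : E, ‖gradient F x - gradient F y‖ ≤ L * ‖x - y‖) {η : ℝ} (hη : 0 ≤ η)
    (hηL : L * η ≤ 1) (w g : E) :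
    F (w - η • g) ≤ F w - η / 2 * ‖gradient F w‖ ^ 2 + η / 2 * ‖gradient F w - g‖ ^ 2 := by
  have hdescent := le_add_inner_gradient_add_sq_of_lipschitz_gradient hF hlip w (-(η • g))
  rw [← sub_eq_add_neg, inner_neg_right, real_inner_smul_right, norm_neg, norm_smul,
    Real.norm_of_nonneg hη] at hdescent
  have hstep : L / 2 * (η * ‖g‖) ^ 2 ≤ η / 2 * ‖g‖ ^ 2 :=
    calc L / 2 * (η * ‖g‖) ^ 2 = L * η * (η / 2 * ‖g‖ ^ 2) := by ring
      _ ≤ 1 * (η / 2 * ‖g‖ ^ 2) := by gcongr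
      _ = η / 2 * ‖g‖ ^ 2 := one_mul _
  rw [norm_sub_sq_real]
  linarith

end

theorem pl_step_biased_general {E : Type*} [NormedAddCommGroup E] [InnerProductSpace ℝ E]
    [CompleteSpace E] (F : E → ℝ) (L : ℝ)
    (hdiff : Differentiable ℝ F)
    (hlip : ∀ w u : E, ‖gradient F w - gradient F u‖ ≤ L * ‖w - u‖)
    (μ : ℝ) (Fstar : ℝ)
    (hPL : ∀ w : E, 2 * μ * (F w - Fstar) ≤ ‖gradient F w‖ ^ 2)
    (η : ℝ) (hη : 0 < η) (hηL : η ≤ 1 / L) :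
    ∀ w g : E,
      F (w - η • g) - Fstar
        ≤ (1 - η * μ) * (F w - Fstar) + η / 2 * ‖gradient F w - g‖ ^ 2 := by
  intro w g
  have hL : 0 < L := one_div_pos.1 (hη.trans_le hηL)
  have hLη : L * η ≤ 1 := by rwa [le_div_iff₀ hL, mul_comm] at hηL
  have hstep := apply_sub_smul_le_of_lipschitz_gradient hdiff hlip hη.le hLη w g
  have hPL_step := mul_le_mul_of_nonneg_left (hPL w) hη.le
  linarith

/-- **One-step contraction under the PL condition.** If `F` is `L`-smooth and satisfies the
Polyak–Łojasiewicz condition with constant `μ > 0` (with finite infimum `F_*`), then for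
`0 < η ≤ 1/L`, every `w` and every `g`,
`F(w - ηg) - F_* ≤ (1 - ημ)(F(w) - F_*) + (η/2)‖∇F(w) - g‖²`. -/
theorem pl_step_biased {E : Type*} [NormedAddCommGroup E] [InnerProductSpace ℝ E]
    [CompleteSpace E] (F : E → ℝ) (L : ℝ) (hL : 0 < L)
    (hdiff : Differentiable ℝ F)
    (hlip : ∀ w u : E, ‖gradient F w - gradient F u‖ ≤ L * ‖w - u‖)
    (μ : ℝ) (hμ : 0 < μ) (Fstar : ℝ) (hFstar : IsGLB (Set.range F) Fstar)
    (hPL : ∀ w : E, 2 * μ * (F w - Fstar) ≤ ‖gradient F w‖ ^ 2)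
    (η : ℝ) (hη : 0 < η) (hηL : η ≤ 1 / L) :
    ∀ w g : E,
      F (w - η • g) - Fstar
        ≤ (1 - η * μ) * (F w - Fstar) + η / 2 * ‖gradient F w - g‖ ^ 2 :=
  pl_step_biased_general F L hdiff hlip μ Fstar hPL η hη hηL
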